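/- Let (R, m) be a commutative Noetherian local ring and let M be a finitely generated R-module fitting into an exact sequence 0 → M →^i R^{⊕n} → X → 0 with depth_R(X) ≥ depth(R). If M ∈ DF(R), then im(i) ⊄ m·R^{⊕n}; that is, M is not a minimal syzygy of X. -/

import Mathlib

open IsLocalRing

/-- The depth of a module `M` over a Noetherian local ring `(R, m)`: the supremum of the
lengths of `M`-regular sequences consisting of elements of `m`. -/
noncomputable def rdepth (R : Type*) (M : Type*) [CommRing R] [IsLocalRing R]
    [AddCommGroup M] [Module R M] : ℕ :=
  sSup {n : ℕ | ∃ rs : List R, rs.length = n ∧ (∀ r ∈ rs, r ∈ maximalIdeal R) ∧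
    RingTheory.Sequence.IsRegular M rs}

/-- `Deep(R)`: the class of finitely generated `R`-modules `M` with `depth_R(M) ≥ depth(R)`. -/
def Deep (R : Type*) (M : Type*) [CommRing R] [IsLocalRing R]
    [AddCommGroup M] [Module R M] : Prop :=
  Module.Finite R M ∧ rdepth R R ≤ rdepth R M

universe u v

/-- `DF(R)` ("deeply faithful"): the class of finitely generated `R`-modules `M` admitting an
exact sequence `0 → R → M^{⊕n} → X → 0` with `X ∈ Deep(R)`. -/
def DF (R : Type u) (M : Type v) [CommRing R] [IsLocalRing R]
    [AddCommGroup M] [Module R M] : Prop :=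
  ∃ (n : ℕ) (X : Type v) (_ : AddCommGroup X) (_ : Module R X)
    (f : R →ₗ[R] (Fin n → M)) (g : (Fin n → M) →ₗ[R] X),
      Function.Injective f ∧ Function.Surjective g ∧ Function.Exact f g ∧ Deep R X

/-!
Suppose `im i ⊆ m R^n`, and let `0 → R → M^k → Y → 0` witness `M ∈ DF(R)`. Take a sequence
`xs ⊆ m` that is regular on `R`, `X` and `Y` and cannot be prolonged. All maximal regular
sequences of a module have the same length (Kaplansky's exchange argument), so comparing
depths shows that `m` consists of zero divisors on `R/(xs)`: there is `r ∉ (xs)` with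
`m r ⊆ (xs)`. As `X` and `Y` are `xs`-regular, `M/xsM → R^n/xsR^n` and `R/(xs) → M^k/xsM^k`
are injective. Now `r · i(M) ⊆ r m R^n ⊆ xs R^n` gives `r M ⊆ xs M`, hence
`f(r) = r f(1) ∈ xs M^k`, hence `r ∈ (xs)`: a contradiction.
-/

open RingTheory.Sequence Submodule Pointwise

section Modules

variable {R : Type*} [CommRing R] {A B C : Type*} [AddCommGroup A] [Module R A]
  [AddCommGroup B] [Module R B] [AddCommGroup C] [Module R C]

theorem mem_smul_top_iff_exists_smul_eq (x : R) (b : B) :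
    b ∈ x • (⊤ : Submodule R B) ↔ ∃ b', x • b' = b := by
  simp [mem_smul_pointwise_iff_exists]

variable (B) in
noncomputable def quotSMulTopComm (x y : R) :
    QuotSMulTop y (QuotSMulTop x B) ≃ₗ[R] QuotSMulTop x (QuotSMulTop y B) :=
  quotEquivOfEq _ _ (by rw [map_pointwise_smul, Submodule.map_top, Submodule.range_mkQ]) ≪≫ₗ
    quotientQuotientEquivQuotientSup (x • ⊤) (y • ⊤) ≪≫ₗ quotEquivOfEq _ _ (sup_comm _ _) ≪≫ₗ
    (quotientQuotientEquivQuotientSup (y • ⊤) (x • ⊤)).symm ≪≫ₗ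
    quotEquivOfEq _ _ (by rw [map_pointwise_smul, Submodule.map_top, Submodule.range_mkQ])

theorem mem_smul_top_of_apply_mem_smul_top {f : A →ₗ[R] B} {g : B →ₗ[R] C}
    (hf : Function.Injective f) (hfg : Function.Exact f g) (hg : Function.Surjective g)
    {rs : List R} (hreg : IsWeaklyRegular C rs) {a : A}
    (ha : f a ∈ (Ideal.ofList rs • ⊤ : Submodule R B)) :
    a ∈ (Ideal.ofList rs • ⊤ : Submodule R A) := by
  have h0 : Function.Exact (0 : PUnit.{1} →ₗ[R] A) f := fun y ↦
    ⟨fun hy ↦ ⟨PUnit.unit, (hf (hy.trans f.map_zero.symm)).symm⟩, by rintro ⟨u, rfl⟩; simp⟩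
  obtain ⟨q, hq⟩ := (map_first_exact_on_four_term_right_exact_of_isSMulRegular_last h0 hfg hg
    hreg (Submodule.Quotient.mk a)).mp ((Submodule.Quotient.mk_eq_zero _).mpr ha)
  obtain ⟨u, rfl⟩ := Submodule.Quotient.mk_surjective _ q
  rw [← Submodule.Quotient.mk_eq_zero, ← hq]
  simp

theorem smul_mem_smul_top_of_mul_mem {I J : Ideal R} {r : R} (hr : ∀ a ∈ J, a * r ∈ I) {b : B}
    (hb : b ∈ (J • ⊤ : Submodule R B)) : r • b ∈ (I • ⊤ : Submodule R B) := by
  refine Submodule.smul_induction_on hb (fun a ha b _ ↦ ?_) fun b b' hb hb' ↦ ?_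
  · rw [smul_smul, mul_comm]
    exact smul_mem_smul (hr a ha) mem_top
  · rw [smul_add]
    exact add_mem hb hb'

theorem pi_mem_smul_top {ι : Type*} [Fintype ι] (I : Ideal R) {b : ι → B}
    (hb : ∀ j, b j ∈ (I • ⊤ : Submodule R B)) : b ∈ (I • ⊤ : Submodule R (ι → B)) := by
  classical
  rw [← Finset.univ_sum_single b]
  exact sum_mem fun j _ ↦ smul_top_le_comap_smul_top I (LinearMap.single R (fun _ ↦ B) j) (hb j)

end Modules

theorem exists_unextendable_list {R : Type*} [CommRing R] [IsNoetherianRing R]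
    (P : List R → Prop) (hP : ∀ xs z, P (xs ++ [z]) → z ∉ Ideal.ofList xs) {xs₀ : List R}
    (h₀ : P xs₀) : ∃ zs, P zs ∧ xs₀.length ≤ zs.length ∧ ∀ z, ¬ P (zs ++ [z]) := by
  suffices H : ∀ J : Ideal R, ∀ xs, Ideal.ofList xs = J → P xs →
      ∃ zs, P zs ∧ xs.length ≤ zs.length ∧ ∀ z, ¬ P (zs ++ [z]) from H _ xs₀ rfl h₀
  intro J
  induction J using WellFoundedGT.induction with
  | _ J ih =>
  intro xs hJ hxs
  by_cases hmax : ∀ z, ¬ P (xs ++ [z])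
  · exact ⟨xs, hxs, le_rfl, hmax⟩
  obtain ⟨z, hz⟩ := not_forall_not.mp hmax
  have hlt : J < Ideal.ofList (xs ++ [z]) := by
    rw [Ideal.ofList_append, Ideal.ofList_singleton, ← hJ]
    exact left_lt_sup.mpr fun h ↦ hP xs z hz (h (Ideal.mem_span_singleton_self z))
  obtain ⟨zs, hzs, hlen, hzmax⟩ := ih _ hlt _ rfl hz
  refine ⟨zs, hzs, ?_, hzmax⟩
  rw [List.length_append, List.length_singleton] at hlen
  omega

section DepthZero

variable {R : Type*} [CommRing R] [IsLocalRing R]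

def DepthZero (R V : Type*) [CommRing R] [IsLocalRing R] [AddCommGroup V] [Module R V] : Prop :=
  ∀ a ∈ maximalIdeal R, ¬ IsSMulRegular V a

variable {V W : Type*} [AddCommGroup V] [Module R V] [AddCommGroup W] [Module R W]

theorem LinearEquiv.depthZero_iff (e : V ≃ₗ[R] W) : DepthZero R V ↔ DepthZero R W :=
  forall₂_congr fun a _ ↦ not_congr (e.isSMulRegular_congr a)

theorem not_depthZero_iff : ¬ DepthZero R V ↔ ∃ a ∈ maximalIdeal R, IsSMulRegular V a := by
  simp [DepthZero]

theorem DepthZero.nontrivial (h : DepthZero R V) : Nontrivial V :=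
  not_subsingleton_iff_nontrivial.mp fun _ ↦ h 0 (zero_mem _) fun _ _ _ ↦ Subsingleton.elim _ _

theorem notMem_ofList_of_isWeaklyRegular_append [Module.Finite R V] [Nontrivial V]
    {xs : List R} {z : R} (hxs : ∀ a ∈ xs, a ∈ maximalIdeal R)
    (h : IsWeaklyRegular V (xs ++ [z])) : z ∉ Ideal.ofList xs := by
  intro hz
  rw [isWeaklyRegular_append_iff, isWeaklyRegular_singleton_iff] at h
  have := (IsRegular.of_isWeaklyRegular_of_mem_maximalIdeal V hxs h.1).quot_ofList_smul_nontrivial ⊤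
  have hzero (q : V ⧸ (Ideal.ofList xs • ⊤ : Submodule R V)) : z • q = 0 := by
    induction q using Submodule.Quotient.induction_on with
    | H v => exact (Submodule.Quotient.mk_eq_zero _).mpr (smul_mem_smul hz mem_top)
  obtain ⟨a, b, hab⟩ := exists_pair_ne (V ⧸ (Ideal.ofList xs • ⊤ : Submodule R V))
  exact hab (h.2 (show z • a = z • b by rw [hzero a, hzero b]))

variable [IsNoetherianRing R]

theorem depthZero_iff_exists_socle [Module.Finite R V] :
    DepthZero R V ↔ ∃ v : V, v ≠ 0 ∧ ∀ a ∈ maximalIdeal R, a • v = 0 := by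
  constructor
  · intro h
    have hHom : ¬ Subsingleton (R ⧸ maximalIdeal R →ₗ[R] V) := by
      rw [IsSMulRegular.subsingleton_linearMap_iff, Ideal.annihilator_quotient]
      rintro ⟨a, ha, hreg⟩
      exact h a ha hreg
    have := not_subsingleton_iff_nontrivial.mp hHom
    obtain ⟨φ, hφ⟩ := exists_ne (0 : R ⧸ maximalIdeal R →ₗ[R] V)
    have hsmul (a : R) : a • φ 1 = φ (Ideal.Quotient.mk _ a) := by
      rw [← map_smul, Algebra.smul_def, mul_one, Ideal.Quotient.algebraMap_eq]
    refine ⟨φ 1, fun h1 ↦ hφ (LinearMap.ext fun x ↦ ?_), fun a ha ↦ ?_⟩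
    · obtain ⟨a, rfl⟩ := Ideal.Quotient.mk_surjective x
      rw [← hsmul, h1, smul_zero, LinearMap.zero_apply]
    · rw [hsmul, Ideal.Quotient.eq_zero_iff_mem.mpr ha, map_zero]
  · rintro ⟨v, hv, hsoc⟩ a ha hreg
    exact hv (hreg (show a • v = a • 0 by rw [hsoc a ha, smul_zero]))

theorem depthZero_prod_iff [Module.Finite R V] [Module.Finite R W] :
    DepthZero R (V × W) ↔ DepthZero R V ∨ DepthZero R W := by
  simp only [depthZero_iff_exists_socle]
  constructor
  · rintro ⟨⟨v, w⟩, hvw, hsoc⟩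
    by_cases hv : v = 0
    · subst hv
      exact .inr ⟨w, fun hw ↦ hvw (by rw [hw]; rfl), fun a ha ↦ congrArg Prod.snd (hsoc a ha)⟩
    · exact .inl ⟨v, hv, fun a ha ↦ congrArg Prod.fst (hsoc a ha)⟩
  · rintro (⟨v, hv, hsoc⟩ | ⟨w, hw, hsoc⟩)
    · exact ⟨(v, 0), fun h ↦ hv (congrArg Prod.fst h), fun a ha ↦ by simp [hsoc a ha]⟩
    · exact ⟨(0, w), fun h ↦ hw (congrArg Prod.snd h), fun a ha ↦ by simp [hsoc a ha]⟩

end DepthZero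

section Exchange

variable {R : Type*} [CommRing R] [IsLocalRing R] [IsNoetherianRing R]
  {V : Type*} [AddCommGroup V] [Module R V] [Module.Finite R V]

theorem isSMulRegular_quotSMulTop_swap {x z : R} (hx : x ∈ maximalIdeal R)
    (hz : z ∈ maximalIdeal R) (hxV : IsSMulRegular V x)
    (hzQ : IsSMulRegular (QuotSMulTop x V) z) : IsSMulRegular (QuotSMulTop z V) x := by
  have hxz : IsWeaklyRegular V [x, z] := by
    rw [isWeaklyRegular_cons_iff, isWeaklyRegular_singleton_iff]
    exact ⟨hxV, hzQ⟩
  have hzx := IsLocalRing.isWeaklyRegular_of_perm_of_subset_maximalIdeal hxz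
    (List.Perm.swap z x []) (by
      simp only [List.mem_cons, List.not_mem_nil, or_false]
      rintro r (rfl | rfl) <;> assumption)
  rw [isWeaklyRegular_cons_iff, isWeaklyRegular_singleton_iff] at hzx
  exact hzx.2

/-- A socle element `u` of `V/xV` gives `y • u = x • v`, and `v` is a socle element of `V/yV`. -/
theorem DepthZero.quotSMulTop_exchange {x y : R} (hy : y ∈ maximalIdeal R)
    (hxV : IsSMulRegular V x) (hyV : IsSMulRegular V y) (h : DepthZero R (QuotSMulTop x V)) :
    DepthZero R (QuotSMulTop y V) := by
  obtain ⟨u', hu0, husoc⟩ := depthZero_iff_exists_socle.mp h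
  obtain ⟨u, rfl⟩ := Submodule.Quotient.mk_surjective _ u'
  simp only [ne_eq, Submodule.Quotient.mk_eq_zero, ← Submodule.Quotient.mk_smul,
    mem_smul_top_iff_exists_smul_eq] at hu0 husoc
  obtain ⟨v, hv⟩ := husoc y hy
  refine depthZero_iff_exists_socle.mpr ⟨Submodule.Quotient.mk v, ?_, fun a ha ↦ ?_⟩
  · simp only [ne_eq, Submodule.Quotient.mk_eq_zero, mem_smul_top_iff_exists_smul_eq]
    rintro ⟨w, rfl⟩
    exact hu0 ⟨w, hyV (show y • x • w = y • u by rw [smul_comm, hv])⟩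
  · obtain ⟨w, hw⟩ := husoc a ha
    rw [← Submodule.Quotient.mk_smul, Submodule.Quotient.mk_eq_zero,
      mem_smul_top_iff_exists_smul_eq]
    exact ⟨w, hxV (show x • y • w = x • a • v by
      rw [smul_comm x y, hw, smul_comm y a, ← hv, smul_comm a x])⟩

theorem exists_isWeaklyRegular_quotSMulTop_of_exchange {x y : R} (hx : x ∈ maximalIdeal R)
    (hy : y ∈ maximalIdeal R) (hxV : IsSMulRegular V x) (hyV : IsSMulRegular V y)
    {ys : List R} (hys : ∀ a ∈ ys, a ∈ maximalIdeal R)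
    (hreg : IsWeaklyRegular (QuotSMulTop y V) ys) :
    ∃ ts : List R, (∀ a ∈ ts, a ∈ maximalIdeal R) ∧ ts.length = ys.length ∧
      IsWeaklyRegular (QuotSMulTop x V) ts := by
  generalize hn : ys.length = n
  induction n generalizing V x y ys with
  | zero => exact ⟨[], by simp, rfl, .nil R _⟩
  | succ n ih =>
    obtain _ | ⟨w, ws⟩ := ys
    · simp at hn
    simp only [List.mem_cons, forall_eq_or_imp] at hys
    simp only [List.length_cons, Nat.add_right_cancel_iff] at hn
    rw [isWeaklyRegular_cons_iff] at hreg
    -- pass through `V/zV` for some `z` regular on both `V/xV` and `V/yV`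
    have hprod : ¬ DepthZero R (QuotSMulTop x V × QuotSMulTop y V) := by
      rw [depthZero_prod_iff]
      rintro (h | h)
      · exact h.quotSMulTop_exchange hy hxV hyV w hys.1 hreg.1
      · exact h w hys.1 hreg.1
    obtain ⟨z, hz, hzreg⟩ := not_depthZero_iff.mp hprod
    obtain ⟨hzQx, hzQy⟩ := Prod.isSMulRegular_iff.mp hzreg
    obtain ⟨ws', hws', hlen', hreg'⟩ := ih hz hys.1 hzQy hreg.1 hys.2 hreg.2 hn
    obtain ⟨ts, hts, hlen, hreg''⟩ := ih (V := QuotSMulTop z V) hx hy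
      (isSMulRegular_quotSMulTop_swap hx hz hxV hzQx)
      (isSMulRegular_quotSMulTop_swap hy hz hyV hzQy) hws'
      ((quotSMulTopComm V y z).isWeaklyRegular_congr ws' |>.mp hreg') hlen'
    refine ⟨z :: ts, ?_, by simp [hlen], ?_⟩
    · simpa [forall_eq_or_imp] using ⟨hz, hts⟩
    · exact (isWeaklyRegular_cons_iff _ _ _).mpr
        ⟨hzQx, (quotSMulTopComm V z x).isWeaklyRegular_congr ts |>.mp hreg''⟩

theorem length_le_of_depthZero {xs : List R} (hxs : ∀ a ∈ xs, a ∈ maximalIdeal R)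
    (hreg : IsWeaklyRegular V xs)
    (hdz : DepthZero R (V ⧸ (Ideal.ofList xs • ⊤ : Submodule R V)))
    {ys : List R} (hys : ∀ a ∈ ys, a ∈ maximalIdeal R) (hyreg : IsWeaklyRegular V ys) :
    ys.length ≤ xs.length := by
  induction xs generalizing V ys with
  | nil =>
    obtain _ | ⟨y, ys⟩ := ys
    · rfl
    rw [(quotEquivOfEqBot _ (by simp)).depthZero_iff] at hdz
    exact absurd ((isWeaklyRegular_cons_iff _ _ _).mp hyreg).1 (hdz y (hys y (by simp)))
  | cons x xs ih =>
    obtain _ | ⟨y, ys⟩ := ys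
    · simp
    simp only [List.mem_cons, forall_eq_or_imp] at hxs hys
    rw [isWeaklyRegular_cons_iff] at hreg hyreg
    obtain ⟨ts, hts, hlen, htreg⟩ := exists_isWeaklyRegular_quotSMulTop_of_exchange hxs.1 hys.1
      hreg.1 hyreg.1 hys.2 hyreg.2
    have := ih hxs.2 hreg.2
      ((quotOfListConsSMulTopEquivQuotSMulTopInner V x xs).depthZero_iff.mp hdz) hts htreg
    simp only [List.length_cons]
    omega

end Exchange

section Depth

variable {R : Type*} [CommRing R] [IsLocalRing R] [IsNoetherianRing R]
  {V W : Type*} [AddCommGroup V] [Module R V] [Module.Finite R V]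
  [AddCommGroup W] [Module R W] [Module.Finite R W]

theorem rdepth_eq_length_of_depthZero {xs : List R} (hxs : ∀ a ∈ xs, a ∈ maximalIdeal R)
    (hreg : IsWeaklyRegular V xs)
    (hdz : DepthZero R (V ⧸ (Ideal.ofList xs • ⊤ : Submodule R V))) :
    rdepth R V = xs.length := by
  have := hdz.nontrivial
  have : Nontrivial V := (mkQ_surjective (Ideal.ofList xs • ⊤ : Submodule R V)).nontrivial
  have hmem : xs.length ∈ {n : ℕ | ∃ rs : List R, rs.length = n ∧
      (∀ r ∈ rs, r ∈ maximalIdeal R) ∧ IsRegular V rs} :=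
    ⟨xs, rfl, hxs, .of_isWeaklyRegular_of_mem_maximalIdeal V hxs hreg⟩
  have hbound : xs.length ∈ upperBounds {n : ℕ | ∃ rs : List R, rs.length = n ∧
      (∀ r ∈ rs, r ∈ maximalIdeal R) ∧ IsRegular V rs} := by
    rintro _ ⟨ys, rfl, hys, hyreg⟩
    exact length_le_of_depthZero hxs hreg hdz hys hyreg.toIsWeaklyRegular
  exact le_antisymm (csSup_le ⟨_, hmem⟩ hbound) (le_csSup ⟨_, hbound⟩ hmem)

theorem length_le_rdepth [Nontrivial V] {ys : List R} (hys : ∀ a ∈ ys, a ∈ maximalIdeal R)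
    (hreg : IsWeaklyRegular V ys) : ys.length ≤ rdepth R V := by
  obtain ⟨zs, ⟨hzs, hzreg⟩, hlen, hmax⟩ := exists_unextendable_list
    (fun zs ↦ (∀ a ∈ zs, a ∈ maximalIdeal R) ∧ IsWeaklyRegular V zs)
    (fun xs z h ↦ notMem_ofList_of_isWeaklyRegular_append
      (fun a ha ↦ h.1 a (List.mem_append_left _ ha)) h.2) ⟨hys, hreg⟩
  have hdz : DepthZero R (V ⧸ (Ideal.ofList zs • ⊤ : Submodule R V)) := fun z hz hzreg' ↦
    hmax z ⟨by simpa [or_imp, forall_and] using ⟨hzs, hz⟩,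
      (isWeaklyRegular_append_iff V _ _).mpr
        ⟨hzreg, (isWeaklyRegular_singleton_iff _ _).mpr hzreg'⟩⟩
  rw [rdepth_eq_length_of_depthZero hzs hzreg hdz]
  exact hlen

theorem DepthZero.of_rdepth_le [Nontrivial W] {zs : List R}
    (hzs : ∀ a ∈ zs, a ∈ maximalIdeal R) (hW : IsWeaklyRegular W zs)
    (hV : IsWeaklyRegular V zs) (hdz : DepthZero R (V ⧸ (Ideal.ofList zs • ⊤ : Submodule R V)))
    (hle : rdepth R W ≤ rdepth R V) :
    DepthZero R (W ⧸ (Ideal.ofList zs • ⊤ : Submodule R W)) := by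
  intro z hz hzreg
  have := length_le_rdepth (V := W) (ys := zs ++ [z])
    (by simpa [or_imp, forall_and] using ⟨hzs, hz⟩)
    ((isWeaklyRegular_append_iff W _ _).mpr ⟨hW, (isWeaklyRegular_singleton_iff _ _).mpr hzreg⟩)
  rw [rdepth_eq_length_of_depthZero hzs hV hdz] at hle
  simp only [List.length_append, List.length_singleton] at this
  omega

theorem exists_isWeaklyRegular_depthZero_quotient (W V₁ V₂ : Type*) [AddCommGroup W]
    [Module R W] [Module.Finite R W] [Nontrivial W] [AddCommGroup V₁] [Module R V₁]
    [Module.Finite R V₁] [AddCommGroup V₂] [Module R V₂] [Module.Finite R V₂]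
    (h₁ : rdepth R W ≤ rdepth R V₁) (h₂ : rdepth R W ≤ rdepth R V₂) :
    ∃ xs : List R, IsWeaklyRegular V₁ xs ∧ IsWeaklyRegular V₂ xs ∧
      DepthZero R (W ⧸ (Ideal.ofList xs • ⊤ : Submodule R W)) := by
  obtain ⟨zs, ⟨hzs, hW, hV₁, hV₂⟩, -, hmax⟩ := exists_unextendable_list
    (fun zs ↦ (∀ a ∈ zs, a ∈ maximalIdeal R) ∧ IsWeaklyRegular W zs ∧
      IsWeaklyRegular V₁ zs ∧ IsWeaklyRegular V₂ zs)
    (fun xs z h ↦ notMem_ofList_of_isWeaklyRegular_append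
      (fun a ha ↦ h.1 a (List.mem_append_left _ ha)) h.2.1) (xs₀ := [])
    ⟨by simp, .nil R W, .nil R V₁, .nil R V₂⟩
  have hdz : DepthZero R ((W ⧸ (Ideal.ofList zs • ⊤ : Submodule R W)) ×
      (V₁ ⧸ (Ideal.ofList zs • ⊤ : Submodule R V₁)) ×
      (V₂ ⧸ (Ideal.ofList zs • ⊤ : Submodule R V₂))) := by
    intro z hz hzreg
    simp only [Prod.isSMulRegular_iff] at hzreg
    refine hmax z ⟨by simpa [or_imp, forall_and] using ⟨hzs, hz⟩, ?_, ?_, ?_⟩ <;>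
      rw [isWeaklyRegular_append_iff, isWeaklyRegular_singleton_iff] <;> tauto
  refine ⟨zs, hV₁, hV₂, ?_⟩
  rcases depthZero_prod_iff.mp hdz with h | h
  · exact h
  rcases depthZero_prod_iff.mp h with h | h
  · exact h.of_rdepth_le hzs hW hV₁ h₁
  · exact h.of_rdepth_le hzs hW hV₂ h₂

end Depth

theorem not_minimal_syzygy {R M X : Type*} [CommRing R] [IsNoetherianRing R] [IsLocalRing R]
    [AddCommGroup M] [Module R M]
    [AddCommGroup X] [Module R X] [Module.Finite R X]
    {n : ℕ} (i : M →ₗ[R] (Fin n → R)) (p : (Fin n → R) →ₗ[R] X)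
    (hi : Function.Injective i) (hp : Function.Surjective p) (hexact : Function.Exact i p)
    (hdeep : rdepth R R ≤ rdepth R X)
    (hDF : DF R M) :
    ¬ (LinearMap.range i ≤ (maximalIdeal R) • (⊤ : Submodule R (Fin n → R))) := by
  intro hmin
  obtain ⟨k, Y, _, _, f, g, hf, hg, hfg, _, hYdeep⟩ := hDF
  obtain ⟨xs, hXreg, hYreg, hdz⟩ :=
    exists_isWeaklyRegular_depthZero_quotient R X Y hdeep hYdeep
  obtain ⟨r', hr0, hrsoc⟩ := depthZero_iff_exists_socle.mp hdz
  obtain ⟨r, rfl⟩ := Submodule.Quotient.mk_surjective _ r'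
  have hr : ∀ a ∈ maximalIdeal R, a * r ∈ Ideal.ofList xs := fun a ha ↦ by
    simpa [Ideal.mul_top] using (Submodule.Quotient.mk_eq_zero _).mp (hrsoc a ha)
  have hrM (u : M) : r • u ∈ (Ideal.ofList xs • ⊤ : Submodule R M) :=
    mem_smul_top_of_apply_mem_smul_top hi hexact hp hXreg <| by
      rw [map_smul]
      exact smul_mem_smul_top_of_mul_mem hr (hmin (LinearMap.mem_range_self i u))
  have hfr : f r ∈ (Ideal.ofList xs • ⊤ : Submodule R (Fin k → M)) := by
    rw [← mul_one r, ← smul_eq_mul, map_smul]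
    exact pi_mem_smul_top _ fun j ↦ hrM (f 1 j)
  exact hr0 ((Submodule.Quotient.mk_eq_zero _).mpr
    (mem_smul_top_of_apply_mem_smul_top hf hfg hg hYreg hfr))
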